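/- An ℝ-tree with at least two points has small inductive dimension 1; more specifically, every point of an ℝ-tree has arbitrarily small open balls whose boundaries are totally disconnected (hence zero-dimensional), so ind ≤ 1, and since it contains an arc, ind = 1. -/

import Mathlib

universe u

/-- `IndLe n X` means the small inductive dimension of `X` is at most `n - 1`:
`IndLe 0 X` iff `X` is empty, and `IndLe (n+1) X` iff every point of `X` has
arbitrarily small open neighborhoods whose frontiers have dimension at most `n - 1`. -/
def IndLe : ℕ → (X : Type u) → [inst : TopologicalSpace X] → Prop
  | 0, X, _ => IsEmpty X
  | n + 1, X, _i => by
    exact ∀ (x : X) (U : Set X), IsOpen U → x ∈ U →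
      ∃ V : Set X, IsOpen V ∧ x ∈ V ∧ V ⊆ U ∧ IndLe n ↥(frontier V)


/-!
On a sphere `S(x, r)` of an ℝ-tree, `d(p, q) = 2 (r - s)` where `s` is the time at which the
geodesics from `x` to `p` and to `q` part: beyond that time they are disjoint, so together they
form the arc from `p` to `q`. For three points of the sphere the geodesics still agree up to the
smaller of two such times, which makes the sphere ultrametric. Hence the frontier of every ball
is zero-dimensional and `ind T ≤ 1`. Geodesics make `T` path connected, so when `T` has two
points no point has a clopen neighbourhood missing the other one, and `ind T ≠ 0`.
-/

open Set Function Metric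

section IndLe

variable {X : Type u}

theorem indLe_succ_iff [TopologicalSpace X] {n : ℕ} :
    IndLe (n + 1) X ↔ ∀ (x : X) (U : Set X), IsOpen U → x ∈ U →
      ∃ V : Set X, IsOpen V ∧ x ∈ V ∧ V ⊆ U ∧ IndLe n (frontier V) :=
  Iff.rfl

theorem indLe_one_iff [TopologicalSpace X] :
    IndLe 1 X ↔ ∀ (x : X) (U : Set X), IsOpen U → x ∈ U →
    ∃ V : Set X, IsClopen V ∧ x ∈ V ∧ V ⊆ U := by
  simp only [IndLe, isEmpty_coe_sort, isClopen_iff_frontier_eq_empty]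
  refine forall₄_congr fun x U _ _ => exists_congr fun V => ⟨?_, ?_⟩
  · rintro ⟨-, hx, hVU, hV⟩
    exact ⟨hV, hx, hVU⟩
  · rintro ⟨hV, hx, hVU⟩
    exact ⟨(isClopen_iff_frontier_eq_empty.2 hV).isOpen, hx, hVU, hV⟩

theorem not_indLe_one [TopologicalSpace X] [T1Space X] [PreconnectedSpace X] [Nontrivial X] :
    ¬ IndLe 1 X := by
  intro h
  obtain ⟨a, b, hab⟩ := exists_pair_ne X
  obtain ⟨V, hV, haV, hVb⟩ := indLe_one_iff.1 h a {b}ᶜ isOpen_compl_singleton hab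
  have hV_univ : V = univ := (isClopen_iff.1 hV).resolve_left (nonempty_of_mem haV).ne_empty
  exact hVb (hV_univ ▸ mem_univ b) rfl

theorem IsUltrametricDist.indLe_one [PseudoMetricSpace X] [IsUltrametricDist X] : IndLe 1 X :=
  indLe_one_iff.2 fun x U hU hx => by
    obtain ⟨r, hr, hball⟩ := Metric.isOpen_iff.1 hU x hx
    exact ⟨ball x r, IsUltrametricDist.isClopen_ball x r, mem_ball_self hr, hball⟩

theorem Metric.indLe_succ_of_frontier_ball [PseudoMetricSpace X] {n : ℕ}
    (h : ∀ (x : X) (r : ℝ), 0 < r → IndLe n (frontier (ball x r))) : IndLe (n + 1) X :=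
  indLe_succ_iff.2 fun x U hU hx => by
    obtain ⟨r, hr, hball⟩ := Metric.isOpen_iff.1 hU x hx
    exact ⟨ball x r, isOpen_ball, mem_ball_self hr, hball, h x r hr⟩

end IndLe

theorem Path.injective_trans {X : Type*} [TopologicalSpace X] {a b c : X}
    {γ₁ : Path a b} {γ₂ : Path b c} (h₁ : Injective γ₁) (h₂ : Injective γ₂)
    (h : range γ₁ ∩ range γ₂ ⊆ {b}) : Injective (γ₁.trans γ₂) := by
  have cross : ∀ u v : unitInterval, γ₁ u = γ₂ v → u = 1 ∧ v = 0 := fun u v huv => by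
    have hb : γ₁ u = b := h ⟨mem_range_self u, huv ▸ mem_range_self v⟩
    exact ⟨h₁ (hb.trans γ₁.target.symm), h₂ ((huv.symm.trans hb).trans γ₂.source.symm)⟩
  intro u v huv
  rw [trans_apply, trans_apply] at huv
  split_ifs at huv with hu hv hv
  · exact Subtype.ext (by simpa using congrArg Subtype.val (h₁ huv))
  · have := congrArg Subtype.val (cross _ _ huv).2
    simp only [Icc.coe_zero] at this
    linarith
  · have := congrArg Subtype.val (cross _ _ huv.symm).2
    simp only [Icc.coe_zero] at this
    linarith
  · exact Subtype.ext (by simpa using congrArg Subtype.val (h₂ huv))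

theorem unitInterval.mul_mem_Icc (u : unitInterval) {d : ℝ} (hd : 0 ≤ d) :
    (u : ℝ) * d ∈ Icc 0 d :=
  ⟨mul_nonneg u.2.1 hd, mul_le_of_le_one_left hd u.2.2⟩

section Geodesic

variable {T : Type u} [MetricSpace T] {x y z : T} {γ₁ γ₂ : ℝ → T}

structure IsGeodesic (a b : T) (γ : ℝ → T) : Prop where
  apply_zero : γ 0 = a
  apply_dist : γ (dist a b) = b
  dist_eq : ∀ u ∈ Icc (0 : ℝ) (dist a b), ∀ v ∈ Icc (0 : ℝ) (dist a b),
    dist (γ u) (γ v) = |u - v|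

namespace IsGeodesic

variable {a b m : T} {γ : ℝ → T}

theorem dist_left (h : IsGeodesic a b γ) {t : ℝ} (ht : t ∈ Icc 0 (dist a b)) :
    dist a (γ t) = t := by
  rw [← h.apply_zero, h.dist_eq 0 (left_mem_Icc.2 dist_nonneg) t ht, zero_sub, abs_neg,
    abs_of_nonneg ht.1]

theorem dist_right (h : IsGeodesic a b γ) {t : ℝ} (ht : t ∈ Icc 0 (dist a b)) :
    dist (γ t) b = dist a b - t := by
  conv_lhs => rw [← h.apply_dist]
  rw [h.dist_eq t ht _ (right_mem_Icc.2 dist_nonneg), abs_sub_comm,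
    abs_of_nonneg (sub_nonneg.2 ht.2)]

theorem dist_add_dist_of_mem (h : IsGeodesic a b γ) (hm : m ∈ γ '' Icc 0 (dist a b)) :
    dist a m + dist m b = dist a b := by
  obtain ⟨t, ht, rfl⟩ := hm
  rw [h.dist_left ht, h.dist_right ht]
  ring

theorem continuousOn (h : IsGeodesic a b γ) : ContinuousOn γ (Icc 0 (dist a b)) :=
  (LipschitzOnWith.of_dist_le' (K := 1) fun u hu v hv => by
    rw [h.dist_eq u hu v hv, one_mul, Real.dist_eq]).continuousOn

theorem truncate (h : IsGeodesic a b γ) {t : ℝ} (ht : t ∈ Icc 0 (dist a b)) :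
    IsGeodesic a (γ t) γ := by
  have hd := h.dist_left ht
  refine ⟨h.apply_zero, by rw [hd], fun u hu v hv => ?_⟩
  rw [hd] at hu hv
  exact h.dist_eq u ⟨hu.1, hu.2.trans ht.2⟩ v ⟨hv.1, hv.2.trans ht.2⟩

theorem shift (h : IsGeodesic a b γ) {s : ℝ} (hs : s ∈ Icc 0 (dist a b)) :
    IsGeodesic (γ s) b (fun t => γ (s + t)) := by
  have hd := h.dist_right hs
  have mem : ∀ u ∈ Icc 0 (dist (γ s) b), s + u ∈ Icc 0 (dist a b) := fun u hu => by
    rw [hd] at hu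
    exact ⟨by linarith [hs.1, hu.1], by linarith [hu.2]⟩
  refine ⟨by rw [add_zero], by rw [hd, add_sub_cancel, h.apply_dist], fun u hu v hv => ?_⟩
  rw [h.dist_eq _ (mem u hu) _ (mem v hv), add_sub_add_left_eq_sub]

def toPath (h : IsGeodesic a b γ) : Path a b where
  toFun u := γ (u * dist a b)
  continuous_toFun := h.continuousOn.comp_continuous (by fun_prop)
    fun u => unitInterval.mul_mem_Icc u dist_nonneg
  source' := by simp [h.apply_zero]
  target' := by simp [h.apply_dist]

theorem range_toPath (h : IsGeodesic a b γ) : range h.toPath = γ '' Icc 0 (dist a b) := by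
  refine Subset.antisymm
    (range_subset_iff.2 fun u => ⟨_, unitInterval.mul_mem_Icc u dist_nonneg, rfl⟩) ?_
  rintro _ ⟨t, ht, rfl⟩
  refine ⟨⟨t / dist a b, div_nonneg ht.1 dist_nonneg, div_le_one_of_le₀ ht.2 dist_nonneg⟩, ?_⟩
  change γ (t / dist a b * dist a b) = γ t
  rw [div_mul_cancel_of_imp fun hd => le_antisymm (hd ▸ ht.2) ht.1]

theorem injective_toPath (h : IsGeodesic a b γ) (hab : a ≠ b) : Injective h.toPath := by
  intro u v huv
  have hd : dist a b ≠ 0 := dist_ne_zero.2 hab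
  have := h.dist_eq _ (unitInterval.mul_mem_Icc u dist_nonneg) _
    (unitInterval.mul_mem_Icc v dist_nonneg)
  change γ _ = γ _ at huv
  rw [huv, dist_self, eq_comm, abs_eq_zero, sub_eq_zero] at this
  exact Subtype.ext (mul_right_cancel₀ hd this)

theorem exists_isGreatest_eq (h₁ : IsGeodesic x y γ₁) (h₂ : IsGeodesic x z γ₂) :
    ∃ s, IsGreatest {t ∈ Icc 0 (min (dist x y) (dist x z)) | γ₁ t = γ₂ t} s := by
  have hsub : Icc 0 (min (dist x y) (dist x z)) ⊆ Icc 0 (dist x y) :=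
    Icc_subset_Icc_right (min_le_left _ _)
  have hsub' : Icc 0 (min (dist x y) (dist x z)) ⊆ Icc 0 (dist x z) :=
    Icc_subset_Icc_right (min_le_right _ _)
  have hclosed :=
    isClosed_Icc.isClosed_eq (h₁.continuousOn.mono hsub) (h₂.continuousOn.mono hsub')
  refine (isCompact_Icc.of_isClosed_subset hclosed (sep_subset _ _)).exists_isGreatest ?_
  exact ⟨0, left_mem_Icc.2 (le_min dist_nonneg dist_nonneg),
    h₁.apply_zero.trans h₂.apply_zero.symm⟩

end IsGeodesic

theorem pathConnectedSpace_of_isGeodesic [Nonempty T]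
    (hgeo : ∀ a b : T, ∃ γ, IsGeodesic a b γ) :
    PathConnectedSpace T :=
  ⟨‹_›, fun a b => let ⟨_, h⟩ := hgeo a b; ⟨h.toPath⟩⟩

def UniqueArcs (T : Type*) [TopologicalSpace T] : Prop :=
  ∀ a b : T, ∀ γ₁ γ₂ : Path a b, Injective γ₁ → Injective γ₂ → range γ₁ = range γ₂

theorem IsGeodesic.eqOn_of_uniqueArcs (hT : UniqueArcs T) (h₁ : IsGeodesic x y γ₁)
    (h₂ : IsGeodesic x y γ₂) : EqOn γ₁ γ₂ (Icc 0 (dist x y)) := by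
  intro t ht
  rcases eq_or_ne x y with rfl | hxy
  · rw [dist_self] at ht
    rw [le_antisymm ht.2 ht.1, h₁.apply_zero, h₂.apply_zero]
  have hmem : γ₁ t ∈ γ₂ '' Icc 0 (dist x y) := by
    rw [← h₂.range_toPath, ← hT x y _ _ (h₁.injective_toPath hxy) (h₂.injective_toPath hxy),
      h₁.range_toPath]
    exact mem_image_of_mem γ₁ ht
  obtain ⟨t', ht', heq⟩ := hmem
  have : t' = t := by rw [← h₂.dist_left ht', heq, h₁.dist_left ht]
  rw [← heq, this]

theorem dist_add_dist_of_mem_range (hgeo : ∀ a b : T, ∃ γ, IsGeodesic a b γ)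
    (hT : UniqueArcs T) {P : Path x z} (hP : Injective P) (hy : y ∈ range P) :
    dist x y + dist y z = dist x z := by
  obtain ⟨γ, hγ⟩ := hgeo x z
  have hxz : x ≠ z := fun h => zero_ne_one (hP (P.source.trans (h ▸ P.target.symm)))
  rw [hT x z P hγ.toPath hP (hγ.injective_toPath hxz), hγ.range_toPath] at hy
  exact hγ.dist_add_dist_of_mem hy

theorem IsGeodesic.eqOn_of_apply_eq (hT : UniqueArcs T) (h₁ : IsGeodesic x y γ₁)
    (h₂ : IsGeodesic x z γ₂) {s : ℝ} (hs : s ∈ Icc 0 (min (dist x y) (dist x z)))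
    (heq : γ₁ s = γ₂ s) : EqOn γ₁ γ₂ (Icc 0 s) := by
  have hsy : s ∈ Icc 0 (dist x y) := ⟨hs.1, hs.2.trans (min_le_left _ _)⟩
  have hsz : s ∈ Icc 0 (dist x z) := ⟨hs.1, hs.2.trans (min_le_right _ _)⟩
  have := (h₁.truncate hsy).eqOn_of_uniqueArcs hT (heq ▸ h₂.truncate hsz)
  rwa [h₁.dist_left hsy] at this

/-- Beyond the last time `s` at which they agree, the geodesics from `x` to `y` and to `z`
are disjoint, so they concatenate to an arc from `y` to `z` through `γ₁ s`. -/
theorem IsGeodesic.dist_eq_of_isGreatest (hgeo : ∀ a b : T, ∃ γ, IsGeodesic a b γ)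
    (hT : UniqueArcs T) (h₁ : IsGeodesic x y γ₁) (h₂ : IsGeodesic x z γ₂) {s : ℝ}
    (hs : IsGreatest {t ∈ Icc 0 (min (dist x y) (dist x z)) | γ₁ t = γ₂ t} s) :
    dist y z = dist x y + dist x z - 2 * s := by
  obtain ⟨⟨⟨hs0, hsmin⟩, heq⟩, hmax⟩ := hs
  have hsy : s ∈ Icc 0 (dist x y) := ⟨hs0, hsmin.trans (min_le_left _ _)⟩
  have hsz : s ∈ Icc 0 (dist x z) := ⟨hs0, hsmin.trans (min_le_right _ _)⟩
  have hmy : dist (γ₁ s) y = dist x y - s := h₁.dist_right hsy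
  have hmz : dist (γ₁ s) z = dist x z - s := heq ▸ h₂.dist_right hsz
  have hxm : dist x (γ₁ s) = s := h₁.dist_left hsy
  by_cases hym : γ₁ s = y
  · rw [hym, dist_self] at hmy
    rw [← hym, hmz, hxm]
    linarith
  by_cases hzm : γ₁ s = z
  · rw [hzm, dist_self] at hmz
    rw [← hzm, dist_comm, hmy, hxm]
    linarith
  have g₁ := h₁.shift hsy
  have g₂ : IsGeodesic (γ₁ s) z fun t => γ₂ (s + t) := heq ▸ h₂.shift hsz
  have hdisj : range g₁.toPath.symm ∩ range g₂.toPath ⊆ {γ₁ s} := by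
    rw [Path.symm_range, g₁.range_toPath, g₂.range_toPath, hmy, hmz]
    rintro _ ⟨⟨a, ha, rfl⟩, b, hb, hab : γ₂ (s + b) = γ₁ (s + a)⟩
    have hay : s + a ∈ Icc 0 (dist x y) := ⟨by linarith [ha.1], by linarith [ha.2]⟩
    have hbz : s + b ∈ Icc 0 (dist x z) := ⟨by linarith [hb.1], by linarith [hb.2]⟩
    have hba : b = a := by
      have := h₂.dist_left hbz
      rw [hab, h₁.dist_left hay] at this
      linarith
    subst hba
    have := hmax ⟨⟨by linarith [ha.1], le_min hay.2 hbz.2⟩, hab.symm⟩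
    rw [mem_singleton_iff, le_antisymm (by linarith) ha.1]
    exact congrArg γ₁ (add_zero s)
  have hinj := Path.injective_trans
    (fun u v huv => unitInterval.symm_bijective.injective (g₁.injective_toPath hym huv))
    (g₂.injective_toPath hzm) hdisj
  have hm : γ₁ s ∈ range (g₁.toPath.symm.trans g₂.toPath) := by
    rw [Path.trans_range]
    exact Or.inl (Path.target_mem_range _)
  have := dist_add_dist_of_mem_range hgeo hT hinj hm
  rw [← this, dist_comm, hmy, hmz]
  ring

theorem IsGeodesic.exists_branch_point (hgeo : ∀ a b : T, ∃ γ, IsGeodesic a b γ)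
    (hT : UniqueArcs T) (h₁ : IsGeodesic x y γ₁) (h₂ : IsGeodesic x z γ₂) :
    ∃ s ∈ Icc 0 (min (dist x y) (dist x z)), EqOn γ₁ γ₂ (Icc 0 s) ∧
      dist y z = dist x y + dist x z - 2 * s := by
  obtain ⟨s, hs⟩ := h₁.exists_isGreatest_eq h₂
  exact ⟨s, hs.1.1, h₁.eqOn_of_apply_eq hT h₂ hs.1.1 hs.1.2,
    h₁.dist_eq_of_isGreatest hgeo hT h₂ hs⟩

theorem dist_le_max_of_mem_sphere (hgeo : ∀ a b : T, ∃ γ, IsGeodesic a b γ)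
    (hT : UniqueArcs T) {r : ℝ} {p q w : T} (hp : p ∈ sphere x r) (hq : q ∈ sphere x r)
    (hw : w ∈ sphere x r) : dist p w ≤ max (dist p q) (dist q w) := by
  rw [mem_sphere'] at hp hq hw
  obtain ⟨γp, hγp⟩ := hgeo x p
  obtain ⟨γq, hγq⟩ := hgeo x q
  obtain ⟨γw, hγw⟩ := hgeo x w
  obtain ⟨s₁, hs₁, hpq, hdpq⟩ := hγp.exists_branch_point hgeo hT hγq
  obtain ⟨s₂, hs₂, hqw, hdqw⟩ := hγq.exists_branch_point hgeo hT hγw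
  rw [hp, hq, min_self] at hs₁
  rw [hq, hw, min_self] at hs₂
  set c := min s₁ s₂
  have hc : c ∈ Icc 0 r := ⟨le_min hs₁.1 hs₂.1, (min_le_left _ _).trans hs₁.2⟩
  have hpw : γp c = γw c :=
    (hpq ⟨hc.1, min_le_left _ _⟩).trans (hqw ⟨hc.1, min_le_right _ _⟩)
  have hdpw : dist p w ≤ 2 * r - 2 * c := by
    have h₁ := hγp.dist_right (hp ▸ hc)
    have h₂ := hγw.dist_right (hw ▸ hc)
    calc dist p w ≤ dist p (γp c) + dist (γw c) w := hpw ▸ dist_triangle _ _ _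
      _ = 2 * r - 2 * c := by rw [dist_comm, h₁, h₂, hp, hw]; ring
  rcases min_choice s₁ s₂ with hc₁ | hc₂
  · exact hdpw.trans_eq (by rw [hdpq, hp, hq, ← hc₁]; ring) |>.trans (le_max_left _ _)
  · exact hdpw.trans_eq (by rw [hdqw, hq, hw, ← hc₂]; ring) |>.trans (le_max_right _ _)

end Geodesic

/-- An ℝ-tree (a geodesic metric space in which any two points are joined by a
unique arc) with at least two points has small inductive dimension exactly 1. -/
theorem stmt16 {T : Type u} [MetricSpace T] [Nontrivial T]
    (hgeo : ∀ a b : T, ∃ γ : ℝ → T, γ 0 = a ∧ γ (dist a b) = b ∧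
      ∀ u ∈ Set.Icc (0 : ℝ) (dist a b), ∀ v ∈ Set.Icc (0 : ℝ) (dist a b),
        dist (γ u) (γ v) = |u - v|)
    (huniq : ∀ a b : T, ∀ γ₁ γ₂ : Path a b,
      Function.Injective ⇑γ₁ → Function.Injective ⇑γ₂ →
        Set.range ⇑γ₁ = Set.range ⇑γ₂) :
    IndLe 2 T ∧ ¬ IndLe 1 T := by
  have hgeo' : ∀ a b : T, ∃ γ, IsGeodesic a b γ := fun a b =>
    let ⟨γ, h₀, h₁, h₂⟩ := hgeo a b
    ⟨γ, h₀, h₁, h₂⟩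
  have : PathConnectedSpace T := pathConnectedSpace_of_isGeodesic hgeo'
  refine ⟨indLe_succ_of_frontier_ball fun x r _ => ?_, not_indLe_one⟩
  have : IsUltrametricDist (frontier (ball x r)) := ⟨fun p q w =>
    dist_le_max_of_mem_sphere hgeo' huniq (frontier_ball_subset_sphere p.2)
      (frontier_ball_subset_sphere q.2) (frontier_ball_subset_sphere w.2)⟩
  exact IsUltrametricDist.indLe_one
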